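/- Let f : ℂ² → ℂ satisfy f(x,y) = f(y,x) for all x,y, let x₁,…,x_k ∈ ℂ and y₁,…,y_k ∈ ℂ \ {0}. Then the Pfaffian of the 2k×2k skew-symmetric matrix whose (j,l) 2×2 block is f(x_j,x_l) · [[(y_j−y_l)/(2 y_j y_l), (y_j+y_l)/(2 y_j y_l)],[−(y_j+y_l)/(2 y_j y_l), −(y_j−y_l)/(2 y_j y_l)]], multiplied by ∏_{j=1}^k y_j, equals det[f(x_j,x_l)]_{j,l=1}^k. -/

import Mathlib

/-!
Write `J` for the standard symplectic form, `k` diagonal copies of `!![0, 1; -1, 0]`.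
The identity `Pf (Gᵀ J G) = det G` holds for every `G`: split `J = P - Pᵀ` with `P` made of
copies of `!![0, 1; 0, 0]`; the unnormalised Pfaffian of `A - Aᵀ` is `2 ^ k` times that of `A`,
and that of `Gᵀ P G = ∑ₘ uₘ vₘᵀ` expands into a sum, over maps `w : Fin k → Fin k`, of
determinants of the rows `u_{w i}, v_{w i}` of `G`, which vanish unless `w` is a permutation and
are `det G` otherwise. The matrix of the theorem is `Wᵀ J W` for
`W = diag(F, diag (2 yⱼ)⁻¹) · (1 ⊗ !![1, -1; 1, 1])`, by the symmetry of `F = [f(xⱼ, xₗ)]`,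
and `det W = det F · ∏ⱼ yⱼ⁻¹`.
-/

open Matrix Finset

/-- The Pfaffian of a `2k × 2k` complex matrix, via the standard combinatorial formula. -/
noncomputable def pfaffian {k : ℕ} (A : Matrix (Fin (2*k)) (Fin (2*k)) ℂ) : ℂ :=
  (1 / ((2:ℂ)^k * (Nat.factorial k : ℂ))) *
    ∑ σ : Equiv.Perm (Fin (2*k)), ((Equiv.Perm.sign σ : ℤ) : ℂ) *
      ∏ i : Fin k, A (σ ⟨2*i.1, by have := i.2; omega⟩) (σ ⟨2*i.1+1, by have := i.2; omega⟩)

open scoped Kronecker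

section

open Equiv

variable {k : ℕ}

local notation "ε" σ => ((Perm.sign σ : ℤ) : ℂ)

def pairEquiv (k : ℕ) : Fin k × Fin 2 ≃ Fin (2 * k) :=
  finProdFinEquiv.trans (finCongr (mul_comm k 2))

@[simp] lemma pairEquiv_apply_val (r : Fin k × Fin 2) :
    (pairEquiv k r : ℕ) = 2 * r.1 + r.2 := by
  simp [pairEquiv]; ring

lemma pfaffian_eq_sum_pairEquiv (A : Matrix (Fin (2*k)) (Fin (2*k)) ℂ) :
    pfaffian A = (1 / ((2:ℂ)^k * (Nat.factorial k : ℂ))) *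
      ∑ σ : Perm (Fin (2*k)), (ε σ) *
        ∏ i, A (σ (pairEquiv k (i, 0))) (σ (pairEquiv k (i, 1))) := by
  have h0 (i : Fin k) : pairEquiv k (i, 0) = ⟨2*i.1, by omega⟩ := Fin.ext (by simp)
  have h1 (i : Fin k) : pairEquiv k (i, 1) = ⟨2*i.1+1, by omega⟩ := Fin.ext (by simp)
  simp only [h0, h1, pfaffian]

lemma pfaffian_sub_transpose (A : Matrix (Fin (2*k)) (Fin (2*k)) ℂ) :
    pfaffian (A - Aᵀ) = 2 ^ k * pfaffian A := by
  rw [pfaffian_eq_sum_pairEquiv, pfaffian_eq_sum_pairEquiv]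
  set e := pairEquiv k
  set S := ∑ σ : Perm (Fin (2*k)), (ε σ) * ∏ i, A (σ (e (i, 0))) (σ (e (i, 1)))
  -- `τ s` exchanges the two members of the `i`-th pair exactly when `s i = 1`
  let τ : (Fin k → Fin 2) → Perm (Fin (2*k)) := fun s =>
    e.permCongr (prodCongrRight fun i => Equiv.addRight (s i))
  have hτ : ∀ s i a, τ s (e (i, a)) = e (i, a + s i) := by
    intro s i a; simp [τ, Equiv.permCongr_apply]
  have hexpand : ∀ σ : Perm (Fin (2*k)), ∏ i, (A - Aᵀ) (σ (e (i, 0))) (σ (e (i, 1))) =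
      ∑ s, (ε τ s) * ∏ i, A ((σ * τ s) (e (i, 0))) ((σ * τ s) (e (i, 1))) := by
    intro σ
    have hpair : ∀ i, (A - Aᵀ) (σ (e (i, 0))) (σ (e (i, 1))) =
        ∑ a : Fin 2, (ε Equiv.addRight a) * A (σ (e (i, 0 + a))) (σ (e (i, 1 + a))) := by
      intro i
      simp [Fin.sum_univ_two, show Perm.sign (Equiv.addRight (1 : Fin 2)) = -1 by decide,
        show (1 + 1 : Fin 2) = 0 by decide, sub_eq_add_neg]
    simp only [hpair, Fintype.prod_sum, Perm.mul_apply, hτ, τ, Perm.sign_permCongr,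
      Perm.sign_prodCongrRight, Units.coe_prod, Int.cast_prod, ← Finset.prod_mul_distrib]
  have hterm : ∀ s, ∑ σ : Perm (Fin (2*k)), (ε σ) * ((ε τ s) *
      ∏ i, A ((σ * τ s) (e (i, 0))) ((σ * τ s) (e (i, 1)))) = S := by
    intro s
    refine Fintype.sum_equiv (Equiv.mulRight (τ s)) _ _ fun σ => ?_
    simp only [Equiv.coe_mulRight, Perm.sign_mul, Units.val_mul, Int.cast_mul, ← mul_assoc]
  calc _ = 1 / ((2:ℂ)^k * (Nat.factorial k : ℂ)) * ∑ _s : Fin k → Fin 2, S := by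
        congr 1
        simp only [hexpand, Finset.mul_sum]
        rw [Finset.sum_comm]
        exact Finset.sum_congr rfl fun s _ => hterm s
    _ = _ := by simp [Finset.card_univ]; ring

lemma transpose_mul_one_kronecker_mul_apply {m n ι R : Type*} [Fintype m] [DecidableEq m]
    [Fintype n] [Semiring R] (G : Matrix (m × n) ι R) (B : Matrix n n R) (p q : ι) :
    (Gᵀ * ((1 : Matrix m m R) ⊗ₖ B) * G) p q =
      ∑ r, ∑ a, ∑ b, G (r, a) p * B a b * G (r, b) q := by
  simp only [Matrix.mul_apply, transpose_apply, kroneckerMap_apply, Matrix.one_apply, ite_mul,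
    one_mul, zero_mul, mul_ite, mul_zero, Fintype.sum_prod_type, sum_ite_irrel, sum_const_zero,
    sum_ite_eq', mem_univ, ↓reduceIte, Finset.sum_mul, mul_assoc]
  exact Finset.sum_congr rfl fun _ _ => Finset.sum_comm

def pairingForm (k : ℕ) : Matrix (Fin k × Fin 2) (Fin k × Fin 2) ℂ :=
  (1 : Matrix (Fin k) (Fin k) ℂ) ⊗ₖ !![0, 1; 0, 0]

def symplecticForm (k : ℕ) : Matrix (Fin k × Fin 2) (Fin k × Fin 2) ℂ :=
  (1 : Matrix (Fin k) (Fin k) ℂ) ⊗ₖ !![0, 1; -1, 0]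

lemma symplecticForm_eq_sub_transpose : symplecticForm k = pairingForm k - (pairingForm k)ᵀ := by
  ext ⟨i, a⟩ ⟨j, b⟩
  fin_cases a <;> fin_cases b <;> simp [symplecticForm, pairingForm, Matrix.one_apply, eq_comm]

def pairRows (G : Matrix (Fin k × Fin 2) (Fin (2*k)) ℂ) (w : Fin k → Fin k) :
    Matrix (Fin (2*k)) (Fin (2*k)) ℂ :=
  G.submatrix (Prod.map w id ∘ (pairEquiv k).symm) id

lemma sum_sign_mul_prod_transpose_mul_pairingForm_mul
    (G : Matrix (Fin k × Fin 2) (Fin (2*k)) ℂ) :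
    ∑ σ : Perm (Fin (2*k)), (ε σ) *
        ∏ i, (Gᵀ * pairingForm k * G) (σ (pairEquiv k (i, 0))) (σ (pairEquiv k (i, 1))) =
      ∑ w, det (pairRows G w) := by
  have hrows : ∀ w (σ : Perm (Fin (2*k))),
      ∏ i, G (w i, 0) (σ (pairEquiv k (i, 0))) * G (w i, 1) (σ (pairEquiv k (i, 1))) =
        ∏ p, pairRows G w p (σ p) := by
    intro w σ
    rw [← (pairEquiv k).prod_comp, Fintype.prod_prod_type]
    simp [pairRows, Fin.prod_univ_two]
  simp only [pairingForm, transpose_mul_one_kronecker_mul_apply, Fin.sum_univ_two, of_apply,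
    cons_val', cons_val_zero, cons_val_one, empty_val', cons_val_fin_one, mul_zero, mul_one,
    zero_mul, add_zero, zero_add, Fintype.prod_sum, Finset.mul_sum, hrows]
  rw [Finset.sum_comm]
  refine Finset.sum_congr rfl fun w _ => ?_
  rw [← det_transpose, det_apply']
  rfl

lemma det_pairRows_perm (G : Matrix (Fin k × Fin 2) (Fin (2*k)) ℂ) (π : Perm (Fin k)) :
    det (pairRows G π) = det (G.submatrix (pairEquiv k).symm id) := by
  have : pairRows G π = (G.submatrix (pairEquiv k).symm id).submatrix
      ((pairEquiv k).permCongr (prodCongrLeft fun _ => π)) id := by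
    ext p q; simp [pairRows, Equiv.permCongr_apply]; rfl
  rw [this, det_permute, Perm.sign_permCongr, Perm.sign_prodCongrLeft, Fin.prod_univ_two,
    Int.units_mul_self, Units.val_one, Int.cast_one, one_mul]

lemma det_pairRows_of_not_injective (G : Matrix (Fin k × Fin 2) (Fin (2*k)) ℂ)
    {w : Fin k → Fin k} (hw : ¬ Function.Injective w) : det (pairRows G w) = 0 := by
  obtain ⟨i, j, hij, hne⟩ : ∃ i j, w i = w j ∧ i ≠ j := by
    simpa [Function.Injective] using hw
  exact det_zero_of_row_eq (i := pairEquiv k (i, 0)) (j := pairEquiv k (j, 0))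
    (by simpa using hne) (by ext q; simp [pairRows, hij])

lemma pfaffian_transpose_mul_pairingForm_mul (G : Matrix (Fin k × Fin 2) (Fin (2*k)) ℂ) :
    pfaffian (Gᵀ * pairingForm k * G) = det (G.submatrix (pairEquiv k).symm id) / 2 ^ k := by
  have hsum :
      ∑ w, det (pairRows G w) = k.factorial * det (G.submatrix (pairEquiv k).symm id) := by
    rw [← Fintype.sum_of_injective _ DFunLike.coe_injective
      (fun π : Perm (Fin k) => det (pairRows G π)) _ ?_ fun _ => rfl]
    · simp [det_pairRows_perm, Finset.card_univ, Fintype.card_perm]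
    · exact fun w hw => det_pairRows_of_not_injective G fun hinj =>
        hw ⟨Equiv.ofBijective w (Finite.injective_iff_bijective.mp hinj), rfl⟩
  have hfact : (k.factorial : ℂ) ≠ 0 := Nat.cast_ne_zero.mpr k.factorial_ne_zero
  rw [pfaffian_eq_sum_pairEquiv, sum_sign_mul_prod_transpose_mul_pairingForm_mul, hsum]
  field_simp

theorem pfaffian_transpose_mul_symplecticForm_mul (G : Matrix (Fin k × Fin 2) (Fin (2*k)) ℂ) :
    pfaffian (Gᵀ * symplecticForm k * G) = det (G.submatrix (pairEquiv k).symm id) := by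
  have hsplit : Gᵀ * symplecticForm k * G =
      Gᵀ * pairingForm k * G - (Gᵀ * pairingForm k * G)ᵀ := by
    simp only [symplecticForm_eq_sub_transpose, Matrix.mul_sub, Matrix.sub_mul, transpose_mul,
      transpose_transpose, Matrix.mul_assoc]
  rw [hsplit, pfaffian_sub_transpose, pfaffian_transpose_mul_pairingForm_mul]
  field_simp

noncomputable def pairBlock (u v : ℂ) : Matrix (Fin 2) (Fin 2) ℂ :=
  !![(u - v) / (2 * u * v), (u + v) / (2 * u * v);
    -((u + v) / (2 * u * v)), -((u - v) / (2 * u * v))]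

noncomputable def symplecticFactor (F : Matrix (Fin k) (Fin k) ℂ) (y : Fin k → ℂ) :
    Matrix (Fin k × Fin 2) (Fin k × Fin 2) ℂ :=
  blockDiagonal ![F, diagonal fun j => (2 * y j)⁻¹] *
    ((1 : Matrix (Fin k) (Fin k) ℂ) ⊗ₖ !![1, -1; 1, 1])

lemma symplecticFactor_apply_zero (F : Matrix (Fin k) (Fin k) ℂ) (y : Fin k → ℂ)
    (m j : Fin k) (b : Fin 2) : symplecticFactor F y (m, 0) (j, b) = F m j * ![1, -1] b := by
  fin_cases b <;> simp [symplecticFactor, Matrix.mul_apply, Fintype.sum_prod_type,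
    Matrix.one_apply, blockDiagonal_apply]

lemma symplecticFactor_apply_one (F : Matrix (Fin k) (Fin k) ℂ) (y : Fin k → ℂ)
    (m j : Fin k) (b : Fin 2) :
    symplecticFactor F y (m, 1) (j, b) = diagonal (fun j => (2 * y j)⁻¹) m j := by
  fin_cases b <;> simp [symplecticFactor, Matrix.mul_apply, Fintype.sum_prod_type,
    Matrix.one_apply, blockDiagonal_apply]

lemma det_symplecticFactor (F : Matrix (Fin k) (Fin k) ℂ) (y : Fin k → ℂ) :
    det (symplecticFactor F y) = det F * ∏ j, (y j)⁻¹ := by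
  simp [symplecticFactor, det_blockDiagonal, Fin.prod_univ_two, det_kronecker, det_fin_two,
    Finset.prod_mul_distrib, one_add_one_eq_two]
  field_simp

lemma symplecticFactor_transpose_mul_symplecticForm_mul (F : Matrix (Fin k) (Fin k) ℂ)
    (hF : F.IsSymm) (y : Fin k → ℂ) (hy : ∀ j, y j ≠ 0) :
    (symplecticFactor F y)ᵀ * symplecticForm k * symplecticFactor F y =
      of fun r s => F r.1 s.1 * pairBlock (y r.1) (y s.1) r.2 s.2 := by
  ext ⟨j, a⟩ ⟨l, b⟩
  simp only [symplecticForm, transpose_mul_one_kronecker_mul_apply, Fin.sum_univ_two,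
    symplecticFactor_apply_zero, symplecticFactor_apply_one]
  fin_cases a <;> fin_cases b <;>
    simp [pairBlock, diagonal_apply, hF.apply j l, Finset.sum_add_distrib] <;>
    field_simp [hy j, hy l] <;> ring

end

/-- Lemma `Pf det` identity: the Pfaffian of the `2k×2k` skew-symmetric matrix assembled from
`2×2` blocks `f(x_j,x_l)·[[(y_j−y_l)/(2y_jy_l), (y_j+y_l)/(2y_jy_l)],
[−(y_j+y_l)/(2y_jy_l), −(y_j−y_l)/(2y_jy_l)]]`, times `∏ y_j`, equals `det [f(x_j,x_l)]`. -/
theorem pfaffian_block_eq_det (k : ℕ) (f : ℂ → ℂ → ℂ) (hf : ∀ x y, f x y = f y x)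
    (x : Fin k → ℂ) (y : Fin k → ℂ) (hy : ∀ j, y j ≠ 0) :
    pfaffian (Matrix.of fun p q : Fin (2*k) =>
      f (x ⟨p.1/2, by have := p.2; omega⟩) (x ⟨q.1/2, by have := q.2; omega⟩) *
        (if p.1 % 2 = 0 then
           (if q.1 % 2 = 0 then
              (y ⟨p.1/2, by have := p.2; omega⟩ - y ⟨q.1/2, by have := q.2; omega⟩) /
                (2 * y ⟨p.1/2, by have := p.2; omega⟩ * y ⟨q.1/2, by have := q.2; omega⟩)
            else
              (y ⟨p.1/2, by have := p.2; omega⟩ + y ⟨q.1/2, by have := q.2; omega⟩) /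
                (2 * y ⟨p.1/2, by have := p.2; omega⟩ * y ⟨q.1/2, by have := q.2; omega⟩))
         else
           (if q.1 % 2 = 0 then
              -((y ⟨p.1/2, by have := p.2; omega⟩ + y ⟨q.1/2, by have := q.2; omega⟩) /
                (2 * y ⟨p.1/2, by have := p.2; omega⟩ * y ⟨q.1/2, by have := q.2; omega⟩))
            else
              -((y ⟨p.1/2, by have := p.2; omega⟩ - y ⟨q.1/2, by have := q.2; omega⟩) /
                (2 * y ⟨p.1/2, by have := p.2; omega⟩ * y ⟨q.1/2, by have := q.2; omega⟩)))))
      * ∏ j : Fin k, y j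
    = Matrix.det (Matrix.of fun j l : Fin k => f (x j) (x l)) := by
  set F : Matrix (Fin k) (Fin k) ℂ := of fun j l => f (x j) (x l)
  have hF : F.IsSymm := IsSymm.ext fun i j => hf (x j) (x i)
  set W := symplecticFactor F y
  set G := W.submatrix id (pairEquiv k).symm
  have hG : Gᵀ * symplecticForm k * G =
      (Wᵀ * symplecticForm k * W).submatrix (pairEquiv k).symm (pairEquiv k).symm := rfl
  refine (congrArg (fun A => pfaffian A * ∏ j, y j)
    (?_ : _ = Gᵀ * symplecticForm k * G)).trans ?_
  · rw [hG, symplecticFactor_transpose_mul_symplecticForm_mul F hF y hy]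
    ext p q
    obtain ⟨⟨j, a⟩, rfl⟩ := (pairEquiv k).surjective p
    obtain ⟨⟨l, b⟩, rfl⟩ := (pairEquiv k).surjective q
    fin_cases a <;> fin_cases b <;>
      simp [pairBlock, F, show ∀ n : ℕ, (2 * n + 1) / 2 = n by omega]
  · rw [pfaffian_transpose_mul_symplecticForm_mul, submatrix_submatrix, Function.id_comp,
      Function.comp_id, det_submatrix_equiv_self, det_symplecticFactor, Finset.prod_inv_distrib,
      mul_assoc, inv_mul_cancel₀ (Finset.prod_ne_zero_iff.mpr fun j _ => hy j), mul_one]
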